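/- Let f : (0,∞) → ℝ be infinitely differentiable and R ∈ ℝ with R ≠ 0 be such that, with l(x) := f(eˣ)e^{−Rx}, every derivative of l is Lebesgue integrable on ℝ. Then: (i) for every n ∈ ℕ the function y ↦ |R+iy|ⁿ·|l̂(y)| is Lebesgue integrable on ℝ, where l̂(y) := ∫_ℝ l(x)e^{−ixy} dx; and (ii) for every s > 0 one has f(s) = ∫_ℝ s^{R+iy} p(R+iy) dy, where p(R+iy) := l̂(y)/(2π) and s^z := exp(z·log s). -/

import Mathlib

open MeasureTheory Complex Set
open scoped FourierTransform

noncomputable def cpowR (s : ℝ) (z : ℂ) : ℂ := Complex.exp (z * Real.log s)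

noncomputable def zLine (R y : ℝ) : ℂ := (R : ℂ) + (y : ℂ) * Complex.I

/-- Fourier transform `l̂(y) = ∫ l(x) e^{-ixy} dx`. -/
noncomputable def lhat (l : ℝ → ℝ) (y : ℝ) : ℂ :=
  ∫ x : ℝ, (l x : ℂ) * Complex.exp (-(Complex.I * (x : ℂ) * (y : ℂ)))

noncomputable def pCoef (l : ℝ → ℝ) (y : ℝ) : ℂ := lhat l y / (2 * (Real.pi : ℂ))

set_option maxHeartbeats 1000000 in
/-- integral representation of the payoff function (Lemma `reprF`). -/
theorem payoff_integral_representation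
    (f : ℝ → ℝ) (R : ℝ) (hR : R ≠ 0)
    (hf : ContDiffOn ℝ (⊤ : ℕ∞) f (Set.Ioi 0))
    (l : ℝ → ℝ) (hl : l = fun x => f (Real.exp x) * Real.exp (-R * x))
    (hlint : ∀ n : ℕ, Integrable (iteratedDeriv n l)) :
    (∀ n : ℕ,
      Integrable (fun y : ℝ => ‖zLine R y‖ ^ n * ‖lhat l y‖)) ∧
    (∀ s : ℝ, 0 < s → (f s : ℂ) = ∫ y : ℝ, cpowR s (zLine R y) * pCoef l y) := by
  have h2pi : (2 * Real.pi) ≠ 0 := by positivity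
  -- smoothness of l
  have hsm : ContDiff ℝ ((⊤ : ℕ∞) : WithTop ℕ∞) l := by
    rw [hl]
    apply ContDiff.mul
    · rw [contDiff_iff_contDiffAt]
      intro x
      exact ((hf.of_le (by simp)).contDiffAt
        (isOpen_Ioi.mem_nhds (Real.exp_pos x))).comp x Real.contDiff_exp.contDiffAt
    · exact Real.contDiff_exp.comp (contDiff_const.mul contDiff_id)
  set L : ℝ → ℂ := fun x => (l x : ℂ) with hL
  have hLsm : ContDiff ℝ ((⊤ : ℕ∞) : WithTop ℕ∞) L :=
    Complex.ofRealCLM.contDiff.comp hsm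
  have hiter : ∀ n : ℕ, iteratedDeriv n L = fun x => ((iteratedDeriv n l x : ℝ) : ℂ) := by
    intro n
    induction n with
    | zero => simp [hL]
    | succ n ih =>
      rw [iteratedDeriv_succ, ih, iteratedDeriv_succ]
      funext x
      have hd : DifferentiableAt ℝ (iteratedDeriv n l) x :=
        (hsm.differentiable_iteratedDeriv n
          (by exact_mod_cast WithTop.coe_lt_top n)).differentiableAt
      exact (hd.hasDerivAt.ofReal_comp).deriv
  have hLint : ∀ n : ℕ, Integrable (iteratedDeriv n L) := fun n => by
    rw [hiter n]; exact (hlint n).ofReal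
  have hL0 : Integrable L := by
    have := hLint 0; rwa [iteratedDeriv_zero] at this
  have hFd : ∀ n : ℕ, 𝓕 (iteratedDeriv n L)
      = fun ξ : ℝ => (2 * (Real.pi : ℂ) * Complex.I * (ξ : ℂ)) ^ n • 𝓕 L ξ := fun n =>
    Real.fourier_iteratedDeriv (N := (⊤ : ℕ∞)) hLsm (fun k _ => hLint k) le_top
  have key : ∀ (n : ℕ) (ξ : ℝ),
      |2 * Real.pi * ξ| ^ n * ‖𝓕 L ξ‖ ≤ ∫ x, ‖iteratedDeriv n L x‖ := by
    intro n ξ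
    have h1 : ‖𝓕 (iteratedDeriv n L) ξ‖ ≤ ∫ x, ‖iteratedDeriv n L x‖ :=
      VectorFourier.norm_fourierIntegral_le_integral_norm _ _ _ _ _
    rw [hFd n] at h1
    have h2 : ‖(2 * (Real.pi : ℂ) * Complex.I * (ξ : ℂ)) ^ n • 𝓕 L ξ‖
        = |2 * Real.pi * ξ| ^ n * ‖𝓕 L ξ‖ := by
      rw [norm_smul, norm_pow]
      congr 2
      simp [Complex.norm_I, Complex.norm_real, abs_mul,
        _root_.abs_of_nonneg Real.pi_pos.le]
    rwa [h2] at h1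
  have lhat_eq : ∀ y : ℝ, lhat l y = 𝓕 L (y / (2 * Real.pi)) := by
    intro y
    rw [Real.fourier_real_eq_integral_exp_smul]
    unfold lhat
    congr 1
    funext x
    rw [smul_eq_mul, mul_comm]
    congr 1
    have h1 : -2 * Real.pi * x * (y / (2 * Real.pi)) = -(x * y) := by
      field_simp
    rw [h1]
    push_cast
    ring_nf
  have hbound : ∀ n : ℕ, ∃ C : ℝ, ∀ y : ℝ, |y| ^ n * ‖lhat l y‖ ≤ C := by
    intro n
    refine ⟨∫ x, ‖iteratedDeriv n L x‖, fun y => ?_⟩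
    have h := key n (y / (2 * Real.pi))
    have h2 : 2 * Real.pi * (y / (2 * Real.pi)) = y := by field_simp
    rw [h2] at h
    rw [lhat_eq y]
    exact h
  choose C hC using hbound
  have hCnn : ∀ k, 0 ≤ C k := fun k =>
    le_trans (by positivity) (hC k 0)
  have hFcont : Continuous (𝓕 L) :=
    VectorFourier.fourierIntegral_continuous Real.continuous_fourierChar
      (by exact continuous_inner (𝕜 := ℝ) (E := ℝ)) hL0
  have hlhat_cont : Continuous (lhat l) := by
    have h2 : lhat l = fun y => 𝓕 L (y / (2 * Real.pi)) := funext lhat_eq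
    rw [h2]
    exact hFcont.comp (continuous_id.div_const _)
  have part1 : ∀ n : ℕ,
      Integrable (fun y : ℝ => ‖zLine R y‖ ^ n * ‖lhat l y‖) := by
    intro n
    set D : ℝ := ∑ k ∈ Finset.range (n + 3), ((n + 2).choose k : ℝ) * C (n + 2 - k) with hD
    have hDnn : 0 ≤ D :=
      Finset.sum_nonneg fun k _ => mul_nonneg (by positivity) (hCnn _)
    have hub : ∀ y : ℝ, (1 + |y|) ^ (n + 2) * ‖lhat l y‖ ≤ D := by
      intro y
      rw [add_pow, Finset.sum_mul]
      apply Finset.sum_le_sum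
      intro k hk
      have h := hC (n + 2 - k) y
      calc (1:ℝ) ^ k * |y| ^ (n + 2 - k) * ((n + 2).choose k : ℝ) * ‖lhat l y‖
          = ((n + 2).choose k : ℝ) * (|y| ^ (n + 2 - k) * ‖lhat l y‖) := by ring
        _ ≤ ((n + 2).choose k : ℝ) * C (n + 2 - k) :=
            mul_le_mul_of_nonneg_left h (by positivity)
    have hcont : Continuous (fun y : ℝ => ‖zLine R y‖ ^ n * ‖lhat l y‖) := by
      apply Continuous.mul
      · apply Continuous.pow
        apply continuous_norm.comp
        unfold zLine
        fun_prop
      · exact continuous_norm.comp hlhat_cont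
    refine (integrable_inv_one_add_sq.const_mul ((|R| + 1) ^ n * D)).mono
      hcont.aestronglyMeasurable ?_
    filter_upwards with y
    have h4 : (0:ℝ) < 1 + y ^ 2 := by positivity
    have h1 : ‖zLine R y‖ ≤ (|R| + 1) * (1 + |y|) := by
      unfold zLine
      refine le_trans (norm_add_le _ _) ?_
      simp only [Complex.norm_real, Real.norm_eq_abs, norm_mul, Complex.norm_I, mul_one]
      nlinarith [abs_nonneg R, abs_nonneg y]
    have h2 : ‖zLine R y‖ ^ n ≤ ((|R| + 1) * (1 + |y|)) ^ n :=
      pow_le_pow_left₀ (norm_nonneg _) h1 n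
    have h3 : (1 + y ^ 2) ≤ (1 + |y|) ^ 2 := by
      nlinarith [abs_nonneg y, _root_.sq_abs y]
    have hmain : ‖zLine R y‖ ^ n * ‖lhat l y‖ * (1 + y ^ 2)
        ≤ (|R| + 1) ^ n * D := by
      calc ‖zLine R y‖ ^ n * ‖lhat l y‖ * (1 + y ^ 2)
          ≤ ((|R| + 1) * (1 + |y|)) ^ n * ‖lhat l y‖ * (1 + |y|) ^ 2 := by
            apply mul_le_mul
              (mul_le_mul h2 le_rfl (norm_nonneg _) (by positivity)) h3 h4.le (by positivity)
        _ = (|R| + 1) ^ n * ((1 + |y|) ^ (n + 2) * ‖lhat l y‖) := by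
            rw [mul_pow]; ring
        _ ≤ (|R| + 1) ^ n * D := mul_le_mul_of_nonneg_left (hub y) (by positivity)
    rw [Real.norm_of_nonneg (by positivity),
      Real.norm_of_nonneg (mul_nonneg (mul_nonneg (by positivity) hDnn) (by positivity))]
    have := (le_div_iff₀ h4).2 hmain
    rwa [div_eq_mul_inv] at this
  refine ⟨part1, ?_⟩
  -- integrability of the Fourier transform
  have hFLint : Integrable (𝓕 L) := by
    have h0 : Integrable (fun y : ℝ => ‖lhat l y‖) := by
      have := part1 0; simpa using this
    have h1 : Integrable (fun ξ : ℝ => ‖lhat l (2 * Real.pi * ξ)‖) :=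
      h0.comp_mul_left' h2pi
    apply h1.mono' hFcont.aestronglyMeasurable
    filter_upwards with ξ
    rw [lhat_eq, mul_div_cancel_left₀ _ h2pi]
  intro s hs
  set x := Real.log s with hx
  have hinv : 𝓕⁻ (𝓕 L) x = L x := hL0.fourierInv_fourier_eq hFLint hLsm.continuous.continuousAt
  set g : ℝ → ℂ := fun ξ => Complex.exp (((2 * Real.pi * ξ * x : ℝ) : ℂ) * Complex.I) • 𝓕 L ξ
    with hg
  have hginv : ∫ ξ : ℝ, g ξ = L x := by
    rw [← hinv, Real.fourierInv_eq_fourier_neg,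
      Real.fourier_real_eq_integral_exp_smul]
    congr 1
    funext ξ
    simp only [hg]
    have harg : -2 * Real.pi * ξ * (-x) = 2 * Real.pi * ξ * x := by ring
    rw [harg]
  have hpt : (fun y : ℝ => cpowR s (zLine R y) * pCoef l y)
      = fun y : ℝ => (((Real.exp (R * x) : ℝ) : ℂ) / (2 * (Real.pi : ℂ))) * g (y / (2 * Real.pi)) := by
    funext y
    rw [hg]
    unfold cpowR zLine pCoef
    rw [lhat_eq y]
    simp only [smul_eq_mul]
    have h2 : 2 * Real.pi * (y / (2 * Real.pi)) = y := by field_simp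
    rw [h2]
    rw [Complex.ofReal_exp]
    have hexp : Complex.exp (((R : ℂ) + (y : ℂ) * Complex.I) * (x : ℂ))
        = Complex.exp ((R * x : ℝ)) * Complex.exp (((y * x : ℝ) : ℂ) * Complex.I) := by
      rw [← Complex.exp_add]; congr 1; push_cast; ring
    rw [hexp]
    ring
  rw [hpt, MeasureTheory.integral_const_mul, MeasureTheory.Measure.integral_comp_div g (2 * Real.pi),
    hginv, abs_of_pos (by positivity : (0:ℝ) < 2 * Real.pi)]
  have hlx : l x = f s * Real.exp (-R * x) := by
    rw [hl]; simp [hx, Real.exp_log hs]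
  have hLx : L x = ((f s * Real.exp (-R * x) : ℝ) : ℂ) := by rw [hL]; exact_mod_cast congrArg _ hlx
  rw [hLx, Complex.real_smul]
  have hee : (Real.exp (R * x) : ℂ) * (Real.exp (-R * x) : ℂ) = 1 := by
    norm_cast
    rw [← Real.exp_add]
    simp
  push_cast
  have hpine : ((Real.pi : ℂ)) ≠ 0 := by exact_mod_cast Real.pi_ne_zero
  have hee2 : Complex.exp ((R : ℂ) * (x : ℂ)) * Complex.exp (-((R : ℂ) * (x : ℂ))) = 1 := by
    rw [← Complex.exp_add]; simp
  field_simp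
  linear_combination (-(f s : ℂ)) * hee2
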